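/- Let g and w be independent standard Gaussian random variables, let ρ ∈ [-1,1], q = √(1-ρ²), and ĝ = ρg + qw. With φ(x) = max(x,0) the ReLU function, E[ φ(g) φ(ĝ) ] = ( q + ρ·arccos(-ρ) ) / (2π). -/

import Mathlib

open MeasureTheory ProbabilityTheory Real Set Filter


noncomputable def phi0 (x : ℝ) : ℝ := (Real.sqrt (2*π))⁻¹ * Real.exp (-(x^2/2))

lemma phi0_def' : phi0 = fun x => (Real.sqrt (2*π))⁻¹ * Real.exp (-(1/2 : ℝ) * x^2) := by
  funext x; unfold phi0; ring_nf

lemma phi0_nonneg (x : ℝ) : 0 ≤ phi0 x := by unfold phi0; positivity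
lemma phi0_cont : Continuous phi0 := by rw [phi0_def']; fun_prop
lemma phi0_le (x : ℝ) : phi0 x ≤ (Real.sqrt (2*π))⁻¹ := by
  have h : Real.exp (-(x^2/2)) ≤ 1 := by
    rw [Real.exp_le_one_iff]; nlinarith [sq_nonneg x]
  calc phi0 x ≤ (Real.sqrt (2*π))⁻¹ * 1 := by unfold phi0; gcongr
    _ = _ := mul_one _
lemma phi0_even (x : ℝ) : phi0 (-x) = phi0 x := by simp [phi0]

lemma integrable_phi0 : Integrable phi0 := by
  rw [phi0_def']
  exact (integrable_exp_neg_mul_sq (by norm_num)).const_mul _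

lemma sqrt_two_pi_sq : Real.sqrt (2*π) * Real.sqrt (2*π) = 2*π := by
  exact Real.mul_self_sqrt (by positivity)

lemma integral_phi0 : ∫ x, phi0 x = 1 := by
  rw [phi0_def', integral_const_mul, integral_gaussian]
  rw [show π / (1/2:ℝ) = 2*π by ring]
  rw [inv_mul_cancel₀ (by positivity)]

lemma integral_phi0_Ioi : ∫ x in Ioi (0:ℝ), phi0 x = 1/2 := by
  rw [phi0_def', integral_const_mul, integral_gaussian_Ioi]
  rw [show π / (1/2:ℝ) = 2*π by ring]
  field_simp


lemma intOn_pow_exp {b : ℝ} (hb : 0 < b) (n : ℕ) :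
    IntegrableOn (fun x : ℝ => x ^ n * Real.exp (-b * x^2)) (Ioi 0) := by
  have h := integrableOn_rpow_mul_exp_neg_mul_sq hb (s := (n:ℝ))
    (lt_of_lt_of_le (by norm_num) (Nat.cast_nonneg n))
  refine h.congr_fun (fun x hx => ?_) measurableSet_Ioi
  simp only [Real.rpow_natCast]

lemma tendsto_exp_neg_b_sq {b : ℝ} (hb : 0 < b) :
    Tendsto (fun x : ℝ => Real.exp (-b * x^2)) atTop (nhds 0) := by
  have h1 : Tendsto (fun x : ℝ => b * x^2) atTop atTop :=
    Tendsto.const_mul_atTop hb (tendsto_pow_atTop (by norm_num))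
  exact Tendsto.congr (fun x => by simp [Function.comp])
    (Real.tendsto_exp_neg_atTop_nhds_zero.comp h1)

lemma tendsto_sq_mul_exp {b : ℝ} (hb : 0 < b) :
    Tendsto (fun x : ℝ => x^2 * Real.exp (-b * x^2)) atTop (nhds 0) := by
  have h1 : Tendsto (fun x : ℝ => b * x^2) atTop atTop :=
    Tendsto.const_mul_atTop hb (tendsto_pow_atTop (by norm_num))
  have h2 := (tendsto_pow_mul_exp_neg_atTop_nhds_zero 1).comp h1
  have h3 : Tendsto (fun x : ℝ => b⁻¹ * (((b * x^2)^1 * Real.exp (-(b * x^2))))) atTop (nhds (b⁻¹ * 0)) :=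
    Tendsto.const_mul _ h2
  simp only [mul_zero] at h3
  refine h3.congr fun x => ?_
  rw [pow_one, neg_mul]
  field_simp

lemma hasDerivAt_exp_neg_b_sq (b x : ℝ) :
    HasDerivAt (fun x : ℝ => Real.exp (-b * x^2)) (-b * (2*x) * Real.exp (-b * x^2)) x := by
  have h := ((hasDerivAt_pow 2 x).const_mul (-b)).exp
  convert h using 1
  push_cast
  ring

lemma integral_Ioi_mul_exp {b : ℝ} (hb : 0 < b) :
    ∫ x in Ioi (0:ℝ), x * Real.exp (-b * x^2) = 1/(2*b) := by
  have key := integral_Ioi_of_hasDerivAt_of_tendsto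
    (f := fun x : ℝ => -(Real.exp (-b * x^2)) / (2*b))
    (f' := fun x : ℝ => x * Real.exp (-b * x^2)) (a := 0) (m := 0)
    (Continuous.continuousWithinAt (by continuity)) ?_ ?_ ?_
  · rw [key]; norm_num; field_simp
  · intro x _
    have h := ((hasDerivAt_exp_neg_b_sq b x).neg).div_const (2*b)
    simp only [Pi.neg_def] at h
    refine h.congr_deriv ?_
    field_simp
  · simpa using intOn_pow_exp hb 1
  · have h := ((tendsto_exp_neg_b_sq hb).neg).div_const (2*b)
    simpa using h

lemma integral_Ioi_cube_exp {b : ℝ} (hb : 0 < b) :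
    ∫ x in Ioi (0:ℝ), x^3 * Real.exp (-b * x^2) = 1/(2*b^2) := by
  have key := integral_Ioi_of_hasDerivAt_of_tendsto
    (f := fun x : ℝ => -((x^2/(2*b) + 1/(2*b^2)) * Real.exp (-b * x^2)))
    (f' := fun x : ℝ => x^3 * Real.exp (-b * x^2)) (a := 0) (m := 0)
    (Continuous.continuousWithinAt (by continuity)) ?_ ?_ ?_
  · rw [key]; norm_num
  · intro x _
    have hpoly : HasDerivAt (fun x : ℝ => x^2/(2*b) + 1/(2*b^2)) (x/b) x := by
      have h0 := ((hasDerivAt_pow 2 x).div_const (2*b)).add_const (1/(2*b^2))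
      refine h0.congr_deriv ?_
      push_cast
      field_simp
    have h := (hpoly.mul (hasDerivAt_exp_neg_b_sq b x)).neg
    simp only [Pi.neg_def, Pi.mul_def] at h
    convert h using 1
    norm_num
    field_simp
    ring
  · simpa using intOn_pow_exp hb 3
  · have h1 := ((tendsto_sq_mul_exp hb).div_const (2*b)).add
      ((tendsto_exp_neg_b_sq hb).div_const (2*b^2))
    have h2 := h1.neg
    simp only [zero_div, add_zero, neg_zero] at h2
    refine h2.congr fun x => ?_
    ring

lemma exp_half_eq (x : ℝ) : Real.exp (-(1/2:ℝ) * x^2) = Real.exp (-(x^2/2)) := by ring_nf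

lemma integral_Ioi_id_exp (a : ℝ) :
    ∫ x in Ioi a, x * Real.exp (-(x^2/2)) = Real.exp (-(a^2/2)) := by
  have key := integral_Ioi_of_hasDerivAt_of_tendsto
    (f := fun x : ℝ => -(Real.exp (-(x^2/2))))
    (f' := fun x : ℝ => x * Real.exp (-(x^2/2))) (a := a) (m := 0)
    (Continuous.continuousWithinAt (by continuity)) ?_ ?_ ?_
  · rw [key]; ring
  · intro x _
    have h := ((hasDerivAt_exp_neg_b_sq (1/2) x).neg)
    have e : ∀ y : ℝ, Real.exp (-(1/2:ℝ) * y^2) = Real.exp (-(y^2/2)) := exp_half_eq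
    simp only [e, Pi.neg_def] at h
    convert h using 1
    ring
  · have h := (integrable_mul_exp_neg_mul_sq (b := (1/2:ℝ)) (by norm_num)).integrableOn
      (s := Ioi a)
    refine h.congr_fun (fun x hx => by simp only [exp_half_eq]) measurableSet_Ioi
  · have h := (tendsto_exp_neg_b_sq (b := (1/2:ℝ)) (by norm_num)).neg
    simp only [neg_zero] at h
    refine h.congr fun x => ?_
    rw [exp_half_eq]

lemma intOn_exp_half_Ioi : IntegrableOn (fun x : ℝ => Real.exp (-(x^2/2))) (Ioi 0) := by
  refine ((integrable_exp_neg_mul_sq (b := (1/2:ℝ)) (by norm_num)).integrableOn).congr_fun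
    (fun x hx => by simp only [exp_half_eq]) measurableSet_Ioi

lemma intOn_sq_exp_half_Ioi : IntegrableOn (fun x : ℝ => x^2 * Real.exp (-(x^2/2))) (Ioi 0) := by
  refine (intOn_pow_exp (b := (1/2:ℝ)) (by norm_num) 2).congr_fun
    (fun x hx => by simp only [exp_half_eq]) measurableSet_Ioi

lemma integral_exp_half_Ioi : ∫ x in Ioi (0:ℝ), Real.exp (-(x^2/2)) = Real.sqrt (2*π) / 2 := by
  have h := integral_gaussian_Ioi (1/2 : ℝ)
  rw [show π / (1/2:ℝ) = 2*π by ring] at h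
  rw [← h]
  exact setIntegral_congr_fun measurableSet_Ioi (fun x hx => by rw [exp_half_eq])

lemma integral_Ioi_sq_exp :
    ∫ x in Ioi (0:ℝ), x^2 * Real.exp (-(x^2/2)) = Real.sqrt (2*π) / 2 := by
  have key := integral_Ioi_of_hasDerivAt_of_tendsto
    (f := fun x : ℝ => -(x * Real.exp (-(x^2/2))))
    (f' := fun x : ℝ => x^2 * Real.exp (-(x^2/2)) - Real.exp (-(x^2/2))) (a := 0) (m := 0)
    (Continuous.continuousWithinAt (by continuity)) ?_ ?_ ?_
  · have hsplit : ∫ x in Ioi (0:ℝ), (x^2 * Real.exp (-(x^2/2)) - Real.exp (-(x^2/2)))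
        = (∫ x in Ioi (0:ℝ), x^2 * Real.exp (-(x^2/2))) - ∫ x in Ioi (0:ℝ), Real.exp (-(x^2/2)) :=
      integral_sub intOn_sq_exp_half_Ioi intOn_exp_half_Ioi
    rw [hsplit] at key
    simp only [neg_zero, mul_zero, zero_mul, sub_zero] at key
    rw [integral_exp_half_Ioi] at key
    linarith [key]
  · intro x _
    have h1 : HasDerivAt (fun x : ℝ => Real.exp (-(x^2/2))) (-x * Real.exp (-(x^2/2))) x := by
      have h := hasDerivAt_exp_neg_b_sq (1/2) x
      have e : ∀ y : ℝ, Real.exp (-(1/2:ℝ) * y^2) = Real.exp (-(y^2/2)) := exp_half_eq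
      simp only [e] at h
      convert h using 1
      ring
    have h2 := ((hasDerivAt_id x).mul h1).neg
    simp only [Pi.neg_def, Pi.mul_def, id] at h2
    convert h2 using 1
    ring
  · exact intOn_sq_exp_half_Ioi.sub intOn_exp_half_Ioi
  · have h1 := tendsto_sq_mul_exp (b := (1/2:ℝ)) (by norm_num)
    have h2 : Tendsto (fun x : ℝ => -(x * Real.exp (-(x^2/2)))) atTop (nhds 0) := by
      have hb : Tendsto (fun x : ℝ => x * Real.exp (-(x^2/2))) atTop (nhds 0) := by
        have hg : Tendsto (fun x : ℝ => (1 + x^2) * Real.exp (-(x^2/2))) atTop (nhds 0) := by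
          have e : ∀ y : ℝ, Real.exp (-(1/2:ℝ) * y^2) = Real.exp (-(y^2/2)) := exp_half_eq
          have := ((tendsto_exp_neg_b_sq (b := (1/2:ℝ)) (by norm_num)).add
            (tendsto_sq_mul_exp (b := (1/2:ℝ)) (by norm_num)))
          simp only [add_zero] at this
          refine this.congr fun x => ?_
          rw [e]
          ring
        refine squeeze_zero_norm (fun x => ?_) hg
        rw [Real.norm_eq_abs, abs_mul, abs_of_pos (Real.exp_pos _)]
        gcongr
        cases abs_cases x with
        | inl h => nlinarith [h.1, sq_nonneg x]
        | inr h => nlinarith [h.1, sq_nonneg (x+1)]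
      simpa using hb.neg
    exact h2

-- assume a.lean defs present; paste minimal deps

noncomputable def Phi (z : ℝ) : ℝ := ∫ t in Ioi (-z), phi0 t

lemma Phi_nonneg (z : ℝ) : 0 ≤ Phi z :=
  setIntegral_nonneg measurableSet_Ioi fun x _ => phi0_nonneg x

lemma Phi_le_one (z : ℝ) : Phi z ≤ 1 := by
  rw [← integral_phi0]
  exact setIntegral_le_integral integrable_phi0
    (Filter.Eventually.of_forall phi0_nonneg)

lemma integral_phi0_Iic : ∫ x in Iic (0:ℝ), phi0 x = 1/2 := by
  have h := integral_add_compl (measurableSet_Iic (a := (0:ℝ))) integrable_phi0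
  rw [compl_Iic, integral_phi0, integral_phi0_Ioi] at h
  linarith

lemma Phi_eq (z : ℝ) : Phi z = 1/2 + ∫ t in (0:ℝ)..z, phi0 t := by
  have h1 : Phi z = ∫ t in Iic z, phi0 t := by
    rw [Phi]
    have h := integral_comp_neg_Ioi (-z) phi0
    rw [neg_neg] at h
    rw [← h]
    exact setIntegral_congr_fun measurableSet_Ioi fun x _ => (phi0_even x).symm
  rw [h1]
  have h2 := intervalIntegral.integral_Iic_sub_Iic (μ := volume) (f := phi0)
    (a := (0:ℝ)) (b := z) integrable_phi0.integrableOn integrable_phi0.integrableOn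
  rw [integral_phi0_Iic] at h2
  linarith

lemma Phi_hasDeriv (z : ℝ) : HasDerivAt Phi (phi0 z) z := by
  have hfun : Phi = fun z => 1/2 + ∫ t in (0:ℝ)..z, phi0 t := funext Phi_eq
  rw [hfun]
  exact (HasDerivAt.const_add (1/2:ℝ)
    ((phi0_cont.integral_hasStrictDerivAt 0 z).hasDerivAt))

lemma Phi_cont : Continuous Phi :=
  continuous_iff_continuousAt.2 fun z => (Phi_hasDeriv z).continuousAt

lemma Phi_zero : Phi 0 = 1/2 := by
  rw [Phi_eq]; simp


lemma gaussianPDFReal_eq_phi0 : gaussianPDFReal 0 1 = phi0 := by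
  funext x
  simp [gaussianPDFReal, phi0]
  left; ring

lemma gaussianReal_std_eq : gaussianReal 0 1
    = (volume : Measure ℝ).withDensity (fun x => ENNReal.ofReal (phi0 x)) := by
  rw [gaussianReal_of_var_ne_zero _ one_ne_zero]
  congr 1
  funext x
  rw [gaussianPDF, gaussianPDFReal_eq_phi0]

lemma integral_gaussianReal_std (f : ℝ → ℝ) :
    ∫ x, f x ∂(gaussianReal 0 1) = ∫ x, f x * phi0 x := by
  rw [gaussianReal_std_eq]
  have h : (fun x => ENNReal.ofReal (phi0 x)) = (fun x => ENNReal.ofNNReal (Real.toNNReal (phi0 x))) := rfl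
  rw [h, integral_withDensity_eq_integral_smul
    (phi0_cont.measurable.real_toNNReal) f]
  congr 1
  funext x
  rw [NNReal.smul_def, smul_eq_mul, Real.coe_toNNReal _ (phi0_nonneg x), mul_comm]

lemma integrable_gaussianReal_iff (f : ℝ → ℝ) :
    Integrable f (gaussianReal 0 1) ↔ Integrable (fun x => f x * phi0 x) := by
  rw [gaussianReal_std_eq]
  have hm : Measurable (fun x : ℝ => ENNReal.ofReal (phi0 x)) :=
    ENNReal.measurable_ofReal.comp phi0_cont.measurable
  rw [integrable_withDensity_iff hm
    (Filter.Eventually.of_forall fun x => ENNReal.ofReal_lt_top)]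
  constructor <;> intro h <;> refine h.congr (Filter.Eventually.of_forall fun x => ?_) <;>
    simp [ENNReal.toReal_ofReal (phi0_nonneg x)]


lemma sqrt_two_pi_pos : 0 < Real.sqrt (2*π) := Real.sqrt_pos.2 (by positivity)

lemma inv_sqrt_two_pi_sq : (Real.sqrt (2*π))⁻¹ * (Real.sqrt (2*π))⁻¹ = (2*π)⁻¹ := by
  rw [← mul_inv, Real.mul_self_sqrt (by positivity)]

lemma integrable_id_phi0 : Integrable (fun y : ℝ => y * phi0 y) := by
  have h := (integrable_mul_exp_neg_mul_sq (b := (1/2:ℝ)) (by norm_num)).const_mul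
    ((Real.sqrt (2*π))⁻¹)
  refine h.congr (Filter.Eventually.of_forall fun y => ?_)
  simp only [phi0, exp_half_eq]
  ring

lemma integrable_abs_phi0 : Integrable (fun y : ℝ => |y| * phi0 y) := by
  have h := integrable_id_phi0.abs
  refine h.congr (Filter.Eventually.of_forall fun y => ?_)
  show |y * phi0 y| = |y| * phi0 y
  rw [abs_mul, abs_of_nonneg (phi0_nonneg y)]

lemma integrable_sq_phi0 : Integrable (fun x : ℝ => x^2 * phi0 x) := by
  have hg : Integrable (fun x : ℝ => 4 * ((Real.sqrt (2*π))⁻¹ * Real.exp (-(1/4:ℝ)*x^2))) :=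
    ((integrable_exp_neg_mul_sq (by norm_num : (0:ℝ) < 1/4)).const_mul _).const_mul 4
  refine Integrable.mono' hg ?_ (Filter.Eventually.of_forall fun x => ?_)
  · exact ((continuous_pow 2).mul phi0_cont).aestronglyMeasurable
  · rw [Real.norm_eq_abs, abs_of_nonneg (mul_nonneg (by positivity) (phi0_nonneg x))]
    unfold phi0
    have h1 : x^2 ≤ 4 * Real.exp (x^2/4) := by
      nlinarith [Real.add_one_le_exp (x^2/4), Real.exp_pos (x^2/4), sq_nonneg x]
    have h2 : x^2 * Real.exp (-(x^2/2)) ≤ 4 * Real.exp (x^2/4) * Real.exp (-(x^2/2)) := by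
      have := Real.exp_pos (-(x^2/2))
      nlinarith
    calc x^2 * ((Real.sqrt (2*π))⁻¹ * Real.exp (-(x^2/2)))
        = (Real.sqrt (2*π))⁻¹ * (x^2 * Real.exp (-(x^2/2))) := by ring
      _ ≤ (Real.sqrt (2*π))⁻¹ * (4 * Real.exp (x^2/4) * Real.exp (-(x^2/2))) := by
          gcongr
      _ = 4 * ((Real.sqrt (2*π))⁻¹ * (Real.exp (x^2/4) * Real.exp (-(x^2/2)))) := by ring
      _ = 4 * ((Real.sqrt (2*π))⁻¹ * Real.exp (-(1/4:ℝ)*x^2)) := by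
          rw [← Real.exp_add]
          congr 2
          ring

lemma phi0_mul_phi0 (c x : ℝ) :
    phi0 (c*x) * phi0 x = (2*π)⁻¹ * Real.exp (-((1+c^2)/2) * x^2) := by
  unfold phi0
  rw [show ((Real.sqrt (2*π))⁻¹ * Real.exp (-((c*x)^2/2))) * ((Real.sqrt (2*π))⁻¹ * Real.exp (-(x^2/2)))
      = ((Real.sqrt (2*π))⁻¹ * (Real.sqrt (2*π))⁻¹) * (Real.exp (-((c*x)^2/2)) * Real.exp (-(x^2/2))) by ring,
    inv_sqrt_two_pi_sq, ← Real.exp_add]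
  congr 1
  ring

-- the inner integral
lemma inner_int (m : ℝ) {q : ℝ} (hq : 0 < q) :
    ∫ y, max (m + q*y) 0 * phi0 y = m * Phi (m/q) + q * phi0 (m/q) := by
  set a : ℝ := -(m/q) with ha
  have hint : Integrable (fun y : ℝ => max (m + q*y) 0 * phi0 y) := by
    have hg : Integrable (fun y : ℝ => |m| * phi0 y + q * (|y| * phi0 y)) :=
      (integrable_phi0.const_mul _).add (integrable_abs_phi0.const_mul _)
    refine Integrable.mono' hg ?_ (Filter.Eventually.of_forall fun y => ?_)
    · exact (((continuous_const.add (continuous_const.mul continuous_id)).max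
        continuous_const).mul phi0_cont).aestronglyMeasurable
    · rw [Real.norm_eq_abs, abs_mul, abs_of_nonneg (phi0_nonneg y)]
      have h1 : |max (m + q*y) 0| ≤ |m| + q * |y| := by
        rw [abs_of_nonneg (le_max_right _ 0)]
        refine max_le ?_ (by positivity)
        have h2 : q * y ≤ q * |y| := mul_le_mul_of_nonneg_left (le_abs_self y) hq.le
        have h3 := le_abs_self m
        linarith
      calc |max (m + q*y) 0| * phi0 y ≤ (|m| + q * |y|) * phi0 y :=
            mul_le_mul_of_nonneg_right h1 (phi0_nonneg y)
        _ = |m| * phi0 y + q * (|y| * phi0 y) := by ring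
  have hsplit := integral_add_compl (measurableSet_Ioi (a := a)) hint
  rw [compl_Ioi] at hsplit
  have hIic : ∫ y in Iic a, max (m + q*y) 0 * phi0 y = 0 := by
    rw [setIntegral_congr_fun measurableSet_Iic
      (g := fun y : ℝ => (0:ℝ)) ?_, integral_zero]
    intro y hy
    have : m + q*y ≤ 0 := by
      have : q * y ≤ q * a := by
        exact mul_le_mul_of_nonneg_left hy hq.le
      have hqa : q * a = -m := by
        rw [ha]; field_simp
      nlinarith
    simp [max_eq_right this]
  have hIoi : ∫ y in Ioi a, max (m + q*y) 0 * phi0 y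
      = m * Phi (m/q) + q * phi0 (m/q) := by
    have hcong : ∫ y in Ioi a, max (m + q*y) 0 * phi0 y
        = ∫ y in Ioi a, (m * phi0 y + q * (y * phi0 y)) := by
      refine setIntegral_congr_fun measurableSet_Ioi fun y hy => ?_
      have hpos : 0 ≤ m + q*y := by
        have hy' : a < y := hy
        have : q * a < q * y := by exact mul_lt_mul_of_pos_left hy' hq
        have hqa : q * a = -m := by rw [ha]; field_simp
        nlinarith
      rw [max_eq_left hpos]
      ring
    rw [hcong, integral_add ((integrable_phi0.const_mul m).integrableOn)
      ((integrable_id_phi0.const_mul q).integrableOn),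
      integral_const_mul, integral_const_mul]
    have hPhi : ∫ y in Ioi a, phi0 y = Phi (m/q) := by rw [Phi, ha]
    have hid : ∫ y in Ioi a, y * phi0 y = phi0 (m/q) := by
      have h1 : ∫ y in Ioi a, y * phi0 y
          = (Real.sqrt (2*π))⁻¹ * ∫ y in Ioi a, y * Real.exp (-(y^2/2)) := by
        rw [← integral_const_mul]
        exact setIntegral_congr_fun measurableSet_Ioi fun y _ => by unfold phi0; ring
      rw [h1, integral_Ioi_id_exp]
      have : a^2 = (m/q)^2 := by rw [ha]; ring
      rw [this]
      rfl
    rw [hPhi, hid]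
  rw [hIic, add_zero] at hsplit
  rw [← hsplit, hIoi]

noncomputable def Jf (c : ℝ) : ℝ := ∫ x in Ioi (0:ℝ), x^2 * Phi (c*x) * phi0 x

lemma T_eq (c : ℝ) :
    ∫ x in Ioi (0:ℝ), x * phi0 (c*x) * phi0 x = (2*π)⁻¹ * (1+c^2)⁻¹ := by
  have hb : (0:ℝ) < (1+c^2)/2 := by positivity
  have hcong : ∫ x in Ioi (0:ℝ), x * phi0 (c*x) * phi0 x
      = ∫ x in Ioi (0:ℝ), (2*π)⁻¹ * (x * Real.exp (-((1+c^2)/2) * x^2)) := by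
    refine setIntegral_congr_fun measurableSet_Ioi fun x _ => ?_
    rw [mul_assoc, phi0_mul_phi0]
    ring
  rw [hcong, integral_const_mul, integral_Ioi_mul_exp hb]
  rw [show 1/(2*((1+c^2)/2)) = (1+c^2)⁻¹ by field_simp]

lemma intOn_sq_Phi_phi0 (c : ℝ) :
    IntegrableOn (fun x : ℝ => x^2 * Phi (c*x) * phi0 x) (Ioi 0) := by
  refine Integrable.mono' (integrable_sq_phi0.integrableOn) ?_ ?_
  · exact (((continuous_pow 2).mul (Phi_cont.comp (continuous_const.mul continuous_id))).mul
      phi0_cont).aestronglyMeasurable.restrict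
  · refine Filter.Eventually.of_forall fun x => ?_
    rw [Real.norm_eq_abs, abs_of_nonneg (mul_nonneg (mul_nonneg (sq_nonneg x)
      (Phi_nonneg _)) (phi0_nonneg x))]
    calc x^2 * Phi (c*x) * phi0 x ≤ (x^2 * 1) * phi0 x :=
          mul_le_mul_of_nonneg_right
            (mul_le_mul_of_nonneg_left (Phi_le_one _) (sq_nonneg x)) (phi0_nonneg x)
      _ = x^2 * phi0 x := by ring

lemma intOn_cube_phi0_pair (c : ℝ) :
    IntegrableOn (fun x : ℝ => x^3 * ((Real.sqrt (2*π))⁻¹ * phi0 x)) (Ioi 0) := by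
  have hb : (0:ℝ) < 1/2 := by norm_num
  have h : IntegrableOn (fun x : ℝ => (Real.sqrt (2*π))⁻¹ * (Real.sqrt (2*π))⁻¹ *
      (x^3 * Real.exp (-(1/2:ℝ)*x^2))) (Ioi 0) :=
    (intOn_pow_exp hb 3).const_mul _
  refine h.congr_fun (fun x hx => ?_) measurableSet_Ioi
  simp only [phi0, exp_half_eq]
  ring

lemma integral_cube_pair (c : ℝ) :
    ∫ x in Ioi (0:ℝ), x^2 * (phi0 (c*x) * x) * phi0 x = π⁻¹ * ((1+c^2)^2)⁻¹ := by
  have hb : (0:ℝ) < (1+c^2)/2 := by positivity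
  have hcong : ∫ x in Ioi (0:ℝ), x^2 * (phi0 (c*x) * x) * phi0 x
      = ∫ x in Ioi (0:ℝ), (2*π)⁻¹ * (x^3 * Real.exp (-((1+c^2)/2) * x^2)) := by
    refine setIntegral_congr_fun measurableSet_Ioi fun x _ => ?_
    have h := phi0_mul_phi0 c x
    calc x^2 * (phi0 (c*x) * x) * phi0 x = x^3 * (phi0 (c*x) * phi0 x) := by ring
      _ = x^3 * ((2*π)⁻¹ * Real.exp (-((1+c^2)/2) * x^2)) := by rw [h]
      _ = (2*π)⁻¹ * (x^3 * Real.exp (-((1+c^2)/2) * x^2)) := by ring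
  rw [hcong, integral_const_mul, integral_Ioi_cube_exp hb]
  have h1 : (1:ℝ)+c^2 ≠ 0 := by positivity
  field_simp

lemma hasDeriv_Jf (c : ℝ) : HasDerivAt Jf (π⁻¹ * ((1+c^2)^2)⁻¹) c := by
  have key := hasDerivAt_integral_of_dominated_loc_of_deriv_le
    (F := fun c (x : ℝ) => x^2 * Phi (c*x) * phi0 x)
    (F' := fun c (x : ℝ) => x^2 * (phi0 (c*x) * x) * phi0 x)
    (x₀ := c) (s := Metric.ball c 1) (μ := volume.restrict (Ioi 0))
    (bound := fun x => |x|^3 * ((Real.sqrt (2*π))⁻¹ * phi0 x))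
    (Metric.ball_mem_nhds c one_pos) ?_ ?_ ?_ ?_ ?_ ?_
  · rw [← integral_cube_pair c]
    exact key.2
  · refine Filter.Eventually.of_forall fun c' => ?_
    exact (((continuous_pow 2).mul (Phi_cont.comp (continuous_const.mul continuous_id))).mul
      phi0_cont).aestronglyMeasurable.restrict
  · exact intOn_sq_Phi_phi0 c
  · exact (((continuous_pow 2).mul ((phi0_cont.comp (continuous_const.mul
      continuous_id)).mul continuous_id)).mul phi0_cont).aestronglyMeasurable.restrict
  · refine Filter.Eventually.of_forall fun x => fun c' _ => ?_
    rw [Real.norm_eq_abs]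
    calc |x^2 * (phi0 (c'*x) * x) * phi0 x| = |x|^3 * (phi0 (c'*x) * phi0 x) := by
          rw [abs_mul, abs_mul, abs_mul, abs_of_nonneg (phi0_nonneg _),
            abs_of_nonneg (phi0_nonneg _), abs_pow]
          ring
      _ ≤ |x|^3 * ((Real.sqrt (2*π))⁻¹ * phi0 x) := by
          refine mul_le_mul_of_nonneg_left ?_ (by positivity)
          exact mul_le_mul_of_nonneg_right (phi0_le _) (phi0_nonneg x)
  · have h := intOn_cube_phi0_pair c
    refine h.congr_fun ?_ measurableSet_Ioi
    intro x hx
    show x^3 * ((Real.sqrt (2*π))⁻¹ * phi0 x) = |x|^3 * ((Real.sqrt (2*π))⁻¹ * phi0 x)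
    rw [abs_of_pos hx]
  · refine Filter.Eventually.of_forall fun x => fun c' _ => ?_
    have h1 : HasDerivAt (fun c' : ℝ => Phi (c'*x)) (phi0 (c'*x) * x) c' := by
      have := (Phi_hasDeriv (c'*x)).comp c' (hasDerivAt_mul_const x)
      exact this
    exact (h1.const_mul (x^2)).mul_const (phi0 x)


lemma Jf_zero : Jf 0 = 1/4 := by
  have hcong : Jf 0 = ∫ x in Ioi (0:ℝ), ((1/2) * (Real.sqrt (2*π))⁻¹) * (x^2 * Real.exp (-(x^2/2))) := by
    refine setIntegral_congr_fun measurableSet_Ioi fun x _ => ?_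
    rw [zero_mul, Phi_zero]
    unfold phi0
    ring
  rw [hcong, integral_const_mul, integral_Ioi_sq_exp]
  have h := sqrt_two_pi_pos
  field_simp
  ring

lemma Jf_eq (c : ℝ) : Jf c = 1/4 + (2*π)⁻¹ * (Real.arctan c + c/(1+c^2)) := by
  have hderivH : ∀ t : ℝ, HasDerivAt (fun t => (2*π)⁻¹ * (Real.arctan t + t/(1+t^2)))
      (π⁻¹ * ((1+t^2)^2)⁻¹) t := by
    intro t
    have ht : (1:ℝ) + t^2 ≠ 0 := by positivity
    have h1 := Real.hasDerivAt_arctan t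
    have h2 : HasDerivAt (fun t : ℝ => t/(1+t^2)) ((1-t^2)/(1+t^2)^2) t := by
      have h0 := (hasDerivAt_id t).div ((hasDerivAt_pow 2 t).const_add 1) ht
      refine h0.congr_deriv ?_
      push_cast
      field_simp
      simp only [id_eq]
      ring
    have h3 := (h1.add h2).const_mul ((2*π)⁻¹)
    refine h3.congr_deriv ?_
    have hπ : π ≠ 0 := Real.pi_ne_zero
    field_simp
    ring
  have hcont : Continuous fun t : ℝ => π⁻¹ * ((1+t^2)^2)⁻¹ := by
    refine continuous_const.mul (Continuous.inv₀ (by continuity) fun t => by positivity)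
  have key1 := intervalIntegral.integral_eq_sub_of_hasDerivAt
    (f := Jf) (f' := fun t => π⁻¹ * ((1+t^2)^2)⁻¹) (a := 0) (b := c)
    (fun t _ => hasDeriv_Jf t) (hcont.intervalIntegrable 0 c)
  have key2 := intervalIntegral.integral_eq_sub_of_hasDerivAt
    (f := fun t => (2*π)⁻¹ * (Real.arctan t + t/(1+t^2)))
    (f' := fun t => π⁻¹ * ((1+t^2)^2)⁻¹) (a := 0) (b := c)
    (fun t _ => hderivH t) (hcont.intervalIntegrable 0 c)
  rw [key1] at key2
  simp only [Real.arctan_zero] at key2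
  rw [Jf_zero] at key2
  have : (2*π)⁻¹ * (0 + 0/(1+(0:ℝ)^2)) = 0 := by norm_num
  rw [this, sub_zero] at key2
  linarith


lemma integrable_sq_gauss : Integrable (fun x : ℝ => x^2) (gaussianReal 0 1) :=
  (integrable_gaussianReal_iff _).2 integrable_sq_phi0

lemma intOn_T (c : ℝ) :
    IntegrableOn (fun x : ℝ => x * phi0 (c*x) * phi0 x) (Ioi 0) := by
  refine Integrable.mono' (((integrable_abs_phi0).const_mul ((Real.sqrt (2*π))⁻¹)).integrableOn) ?_
    (Filter.Eventually.of_forall fun x => ?_)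
  · exact ((continuous_id.mul (phi0_cont.comp (continuous_const.mul continuous_id))).mul
      phi0_cont).aestronglyMeasurable.restrict
  · rw [Real.norm_eq_abs, abs_mul, abs_mul, abs_of_nonneg (phi0_nonneg _),
      abs_of_nonneg (phi0_nonneg _)]
    calc |x| * phi0 (c*x) * phi0 x ≤ |x| * (Real.sqrt (2*π))⁻¹ * phi0 x := by
          refine mul_le_mul_of_nonneg_right
            (mul_le_mul_of_nonneg_left (phi0_le _) (abs_nonneg x)) (phi0_nonneg x)
      _ = (Real.sqrt (2*π))⁻¹ * (|x| * phi0 x) := by ring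

lemma abs_max_le (a : ℝ) : |max a 0| ≤ |a| := by
  rw [abs_of_nonneg (le_max_right a 0)]
  exact max_le (le_abs_self a) (abs_nonneg a)

-- half integral of (max x 0)^2 type
lemma integral_max_sq : ∫ x, max x 0 * max x 0 ∂(gaussianReal 0 1) = 1/2 := by
  rw [integral_gaussianReal_std]
  have hint : Integrable (fun x : ℝ => (max x 0 * max x 0) * phi0 x) := by
    refine Integrable.mono' integrable_sq_phi0 ?_ (Filter.Eventually.of_forall fun x => ?_)
    · exact (((continuous_id.max continuous_const).mul
        (continuous_id.max continuous_const)).mul phi0_cont).aestronglyMeasurable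
    · rw [Real.norm_eq_abs, abs_mul, abs_of_nonneg (phi0_nonneg _), abs_mul]
      refine mul_le_mul_of_nonneg_right ?_ (phi0_nonneg x)
      calc |max x 0| * |max x 0| ≤ |x| * |x| :=
            mul_le_mul (abs_max_le x) (abs_max_le x) (abs_nonneg _) (abs_nonneg _)
        _ = x^2 := by rw [← abs_mul, abs_mul_self]; ring
  have hsplit := integral_add_compl (measurableSet_Ioi (a := (0:ℝ))) hint
  rw [compl_Ioi] at hsplit
  have hIic : ∫ x in Iic (0:ℝ), (max x 0 * max x 0) * phi0 x = 0 := by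
    rw [setIntegral_congr_fun measurableSet_Iic (g := fun x : ℝ => (0:ℝ)) ?_, integral_zero]
    intro x hx
    have : max x 0 = 0 := max_eq_right hx
    simp [this]
  have hIoi : ∫ x in Ioi (0:ℝ), (max x 0 * max x 0) * phi0 x = 1/2 := by
    have hcong : ∫ x in Ioi (0:ℝ), (max x 0 * max x 0) * phi0 x
        = ∫ x in Ioi (0:ℝ), (Real.sqrt (2*π))⁻¹ * (x^2 * Real.exp (-(x^2/2))) := by
      refine setIntegral_congr_fun measurableSet_Ioi fun x hx => ?_
      rw [max_eq_left (le_of_lt hx)]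
      unfold phi0
      ring
    rw [hcong, integral_const_mul, integral_Ioi_sq_exp]
    have h := sqrt_two_pi_pos
    field_simp
  rw [hIic, add_zero] at hsplit
  rw [← hsplit, hIoi]

theorem relu_kernel_K1 (ρ : ℝ) (hρ : ρ ∈ Set.Icc (-1 : ℝ) 1) :
    (∫ p : ℝ × ℝ,
        max p.1 0 * max (ρ * p.1 + Real.sqrt (1 - ρ ^ 2) * p.2) 0
      ∂((gaussianReal 0 1).prod (gaussianReal 0 1)))
    = (Real.sqrt (1 - ρ ^ 2) + ρ * Real.arccos (-ρ)) / (2 * π) := by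
  obtain ⟨hρ1, hρ2⟩ := hρ
  rcases eq_or_lt_of_le hρ2 with h1 | h1
  · -- ρ = 1
    subst h1
    have hs : Real.sqrt (1 - 1^2) = 0 := by norm_num
    rw [hs]
    have hcong : (∫ p : ℝ × ℝ, max p.1 0 * max (1 * p.1 + 0 * p.2) 0
          ∂((gaussianReal 0 1).prod (gaussianReal 0 1)))
        = ∫ p : ℝ × ℝ, (fun x => max x 0 * max x 0) p.1 * (fun _ : ℝ => (1:ℝ)) p.2
          ∂((gaussianReal 0 1).prod (gaussianReal 0 1)) := by
      congr 1
      funext p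
      simp
    have hpm := integral_prod_mul (μ := gaussianReal 0 1) (ν := gaussianReal 0 1)
      (f := fun x : ℝ => max x 0 * max x 0) (g := fun _ : ℝ => (1:ℝ))
    rw [hcong, hpm, integral_max_sq]
    simp [Real.arccos_neg_one]
    field_simp
  · rcases eq_or_lt_of_le hρ1 with h2 | h2
    · -- ρ = -1
      rw [← h2]
      have hs : Real.sqrt (1 - (-1:ℝ)^2) = 0 := by norm_num
      rw [hs]
      have hcong : (∫ p : ℝ × ℝ, max p.1 0 * max ((-1) * p.1 + 0 * p.2) 0
            ∂((gaussianReal 0 1).prod (gaussianReal 0 1)))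
          = ∫ _p : ℝ × ℝ, (0:ℝ) ∂((gaussianReal 0 1).prod (gaussianReal 0 1)) := by
        congr 1
        funext p
        rcases le_total p.1 0 with h | h
        · rw [max_eq_right h]; ring
        · have : (-1) * p.1 + 0 * p.2 ≤ 0 := by linarith
          rw [max_eq_right this]; ring
      rw [hcong, integral_zero]
      simp [Real.arccos_one]
    · -- -1 < ρ < 1
      set q : ℝ := Real.sqrt (1 - ρ^2) with hqdef
      have hq2 : q^2 = 1 - ρ^2 := Real.sq_sqrt (by nlinarith)
      have hq : 0 < q := Real.sqrt_pos.2 (by nlinarith)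
      set c : ℝ := ρ/q with hcdef
      have hcq : c * q = ρ := by rw [hcdef]; field_simp
      have hne : 1 - ρ^2 ≠ 0 := by nlinarith
      have h1c : 1 + c^2 = (q^2)⁻¹ := by
        rw [hcdef, div_pow, hq2]
        field_simp
        ring
      -- integrability on the product
      have hInt : Integrable (fun p : ℝ×ℝ => max p.1 0 * max (ρ*p.1 + q*p.2) 0)
          ((gaussianReal 0 1).prod (gaussianReal 0 1)) := by
        have hsq1 : Integrable (fun p : ℝ×ℝ => p.1^2)
            ((gaussianReal 0 1).prod (gaussianReal 0 1)) := by
          have h0 : Integrable (fun p : ℝ×ℝ => p.1^2 * 1)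
              ((gaussianReal 0 1).prod (gaussianReal 0 1)) :=
            Integrable.mul_prod integrable_sq_gauss (integrable_const 1)
          have he : (fun p : ℝ×ℝ => p.1^2) = fun p : ℝ×ℝ => p.1^2 * 1 := by funext p; ring
          rw [he]; exact h0
        have hsq2 : Integrable (fun p : ℝ×ℝ => p.2^2)
            ((gaussianReal 0 1).prod (gaussianReal 0 1)) := by
          have h0 : Integrable (fun p : ℝ×ℝ => (1:ℝ) * p.2^2)
              ((gaussianReal 0 1).prod (gaussianReal 0 1)) :=
            Integrable.mul_prod (integrable_const 1) integrable_sq_gauss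
          have he : (fun p : ℝ×ℝ => p.2^2) = fun p : ℝ×ℝ => (1:ℝ) * p.2^2 := by funext p; ring
          rw [he]; exact h0
        refine Integrable.mono' (((hsq1.const_mul (|ρ| + q/2)).add
          (hsq2.const_mul (q/2)))) ?_ (Filter.Eventually.of_forall fun p => ?_)
        · exact ((continuous_fst.max continuous_const).mul
            (((continuous_const.mul continuous_fst).add
              (continuous_const.mul continuous_snd)).max continuous_const)).aestronglyMeasurable
        · rw [Real.norm_eq_abs, abs_mul]
          have e1 := abs_max_le p.1
          have e2 := abs_max_le (ρ*p.1 + q*p.2)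
          have e3 : |ρ*p.1 + q*p.2| ≤ |ρ| * |p.1| + q* |p.2| := by
            calc |ρ*p.1 + q*p.2| ≤ |ρ*p.1| + |q*p.2| := abs_add_le _ _
              _ = |ρ| * |p.1| + q* |p.2| := by rw [abs_mul, abs_mul, abs_of_pos hq]
          have e4 : |p.1| * |p.2| ≤ (p.1^2 + p.2^2)/2 := by
            nlinarith [sq_nonneg (|p.1| - |p.2|), sq_abs p.1, sq_abs p.2]
          have e5 : |max p.1 0| * |max (ρ*p.1 + q*p.2) 0| ≤ |p.1| * (|ρ| * |p.1| + q* |p.2|) :=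
            mul_le_mul e1 (le_trans e2 e3) (abs_nonneg _) (abs_nonneg _)
          have e6 : |p.1| * (|ρ| * |p.1| + q* |p.2|) = |ρ| *(|p.1| * |p.1|) + q*(|p.1| * |p.2|) := by ring
          have e7 : |p.1| * |p.1| = p.1^2 := by rw [← abs_mul, abs_mul_self]; ring
          calc |max p.1 0| * |max (ρ*p.1 + q*p.2) 0| ≤ |ρ| *p.1^2 + q*(|p.1| * |p.2|) := by
                rw [e6, e7] at e5; exact e5
            _ ≤ |ρ| *p.1^2 + q*((p.1^2 + p.2^2)/2) := by
                have := mul_le_mul_of_nonneg_left e4 hq.le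
                linarith
            _ = (|ρ| + q/2)*p.1^2 + q/2*p.2^2 := by ring
      rw [integral_prod _ hInt]
      -- inner integral
      have hinner : ∀ x : ℝ, (∫ y, max x 0 * max (ρ*x + q*y) 0 ∂(gaussianReal 0 1))
          = max x 0 * (ρ*x * Phi (c*x) + q * phi0 (c*x)) := by
        intro x
        rw [integral_gaussianReal_std]
        have hcong : (∫ y, (max x 0 * max (ρ*x + q*y) 0) * phi0 y)
            = ∫ y, max x 0 * (max (ρ*x + q*y) 0 * phi0 y) := by
          congr 1; funext y; ring
        rw [hcong, integral_const_mul, inner_int (ρ*x) hq]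
        have : ρ*x/q = c*x := by rw [hcdef]; ring
        rw [this]
      simp_rw [hinner]
      -- outer integral
      rw [integral_gaussianReal_std]
      have hIntOuter : Integrable (fun x : ℝ =>
          (max x 0 * (ρ*x * Phi (c*x) + q * phi0 (c*x))) * phi0 x) := by
        refine Integrable.mono' (((integrable_sq_phi0).const_mul |ρ|).add
          ((integrable_abs_phi0).const_mul (q * (Real.sqrt (2*π))⁻¹))) ?_
          (Filter.Eventually.of_forall fun x => ?_)
        · refine Continuous.aestronglyMeasurable ?_
          refine ((continuous_id.max continuous_const).mul ?_).mul phi0_cont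
          exact ((continuous_const.mul continuous_id).mul
            (Phi_cont.comp (continuous_const.mul continuous_id))).add
            (continuous_const.mul (phi0_cont.comp (continuous_const.mul continuous_id)))
        · rw [Real.norm_eq_abs, abs_mul, abs_of_nonneg (phi0_nonneg x), abs_mul]
          have e1 : |max x 0| ≤ |x| := abs_max_le x
          have e2 : |ρ*x * Phi (c*x) + q * phi0 (c*x)| ≤ |ρ| * |x| + q * (Real.sqrt (2*π))⁻¹ := by
            calc |ρ*x * Phi (c*x) + q * phi0 (c*x)|
                ≤ |ρ*x * Phi (c*x)| + |q * phi0 (c*x)| := abs_add_le _ _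
              _ ≤ |ρ| * |x| + q * (Real.sqrt (2*π))⁻¹ := by
                  refine add_le_add ?_ ?_
                  · rw [abs_mul, abs_mul]
                    have hP : |Phi (c*x)| ≤ 1 := by
                      rw [abs_of_nonneg (Phi_nonneg _)]; exact Phi_le_one _
                    calc |ρ| * |x| * |Phi (c*x)| ≤ |ρ| * |x| *1 :=
                          mul_le_mul_of_nonneg_left hP (by positivity)
                      _ = |ρ| * |x| := by ring
                  · rw [abs_mul, abs_of_pos hq, abs_of_nonneg (phi0_nonneg _)]
                    exact mul_le_mul_of_nonneg_left (phi0_le _) hq.le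
          calc |max x 0| * |ρ*x * Phi (c*x) + q * phi0 (c*x)| * phi0 x
              ≤ (|x| * (|ρ| * |x| + q * (Real.sqrt (2*π))⁻¹)) * phi0 x := by
                refine mul_le_mul_of_nonneg_right
                  (mul_le_mul e1 e2 (abs_nonneg _) (abs_nonneg _)) (phi0_nonneg x)
            _ = |ρ| *(|x| * |x| *phi0 x) + (q * (Real.sqrt (2*π))⁻¹)*(|x| * phi0 x) := by ring
            _ = |ρ| *(x^2*phi0 x) + (q * (Real.sqrt (2*π))⁻¹)*(|x| * phi0 x) := by
                rw [← abs_mul, abs_mul_self, ← sq]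
      have hsplit := integral_add_compl (measurableSet_Ioi (a := (0:ℝ))) hIntOuter
      rw [compl_Ioi] at hsplit
      have hIic : ∫ x in Iic (0:ℝ), (max x 0 * (ρ*x * Phi (c*x) + q * phi0 (c*x))) * phi0 x = 0 := by
        rw [setIntegral_congr_fun measurableSet_Iic (g := fun _ : ℝ => (0:ℝ)) ?_, integral_zero]
        intro x hx
        have hx' : x ≤ 0 := hx
        show (max x 0 * (ρ*x * Phi (c*x) + q * phi0 (c*x))) * phi0 x = 0
        rw [max_eq_right hx']
        ring
      have hIoi : ∫ x in Ioi (0:ℝ), (max x 0 * (ρ*x * Phi (c*x) + q * phi0 (c*x))) * phi0 x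
          = ρ * Jf c + q * ((2*π)⁻¹ * (1+c^2)⁻¹) := by
        have hcong : ∫ x in Ioi (0:ℝ), (max x 0 * (ρ*x * Phi (c*x) + q * phi0 (c*x))) * phi0 x
            = ∫ x in Ioi (0:ℝ), (ρ * (x^2 * Phi (c*x) * phi0 x) + q * (x * phi0 (c*x) * phi0 x)) := by
          refine setIntegral_congr_fun measurableSet_Ioi fun x hx => ?_
          rw [max_eq_left (le_of_lt hx)]
          ring
        rw [hcong, integral_add ((intOn_sq_Phi_phi0 c).const_mul ρ) ((intOn_T c).const_mul q),
          integral_const_mul, integral_const_mul, T_eq]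
        rfl
      rw [hIic, add_zero] at hsplit
      rw [← hsplit, hIoi]
      -- final algebra
      have harctan : Real.arctan c = Real.arcsin ρ := by
        rw [Real.arctan_eq_arcsin]
        congr 1
        rw [h1c, Real.sqrt_inv, Real.sqrt_sq hq.le]
        rw [div_eq_mul_inv, inv_inv, hcq]
      have harccos : Real.arccos (-ρ) = π/2 + Real.arcsin ρ := by
        rw [Real.arccos_neg, Real.arccos_eq_pi_div_two_sub_arcsin]
        ring
      have hcc : c/(1+c^2) = ρ*q := by
        rw [h1c, div_eq_mul_inv, inv_inv, pow_two, ← mul_assoc, hcq]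
      have h1cinv : (1+c^2)⁻¹ = q^2 := by rw [h1c, inv_inv]
      rw [Jf_eq, harctan, hcc, h1cinv, hq2, harccos]
      field_simp
      ring
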